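/- Let R be a commutative ring and x : ℕ → R. For l ≥ 1 define p_{l;n}^{(m)} = Σ_{r=0}^{n} (−1)^r C(n,r) Σ_{a₁+⋯+a_m = r+l, aᵢ ≥ 1} x_{a₁}⋯x_{a_m}, and define p_{0;n}^{(m)} = (−1)^{m−1} x₀^m + Σ_{r=1}^{n} (−1)^r C(n,r) Σ_{a₁+⋯+a_m = r, aᵢ ≥ 1} x_{a₁}⋯x_{a_m}. Then for all m ≥ 2 and n ≥ 1: p_{0;n}^{(m)} = (−1)^{m−1} x₀^{m−1} · p_{0;n−1}^{(1)} − Σ_{k=0}^{n−2} p_{1;k}^{(1)} · p_{0;n−1−k}^{(m−1)}. -/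

import Mathlib

/-!
Let `T f n = ∑_{r ≤ n} (-1)^r C(n,r) f r` be the signed binomial transform and `c_m = compSum x m`
the `m`-th Cauchy power of `(0, x₁, x₂, …)`, so `p_{0;n}^{(m)} = (-1)^{m-1} x₀^m + T c_m n` and
`p_{1;k}^{(1)} = T (c_1 ∘ succ) k`. The transform turns Cauchy products into partial sums,
`∑_{k ≤ N} T f k · T g (N-k) = ∑_{j ≤ N} T (f * g) j`, and partial sums of the transform of a
shifted sequence telescope, `∑_{j < N} T (h ∘ succ) j = h 0 - T h N`. Since
`(c_1 ∘ succ) * c_{m-1} = c_m ∘ succ`, the convolution sum in the recursion collapses to `-T c_m n`,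
and the constant terms cancel by the same telescoping applied to `c_1`.
-/

/-- Sum over all compositions `(a₁,…,a_m)` of `N` into `m` positive parts of the
monomials `x_{a₁}⋯x_{a_m}`. -/
noncomputable def compSum {R : Type*} [CommRing R] (x : ℕ → R) (m N : ℕ) : R :=
  ∑ a ∈ (Finset.Nat.antidiagonalTuple m N).filter (fun a => ∀ i, 1 ≤ a i),
    ∏ i, x (a i)

/-- `p_{l;n}^{(m)} = Σ_{r=0}^{n} (−1)^r C(n,r) Σ_{a₁+⋯+a_m=r+l, aᵢ≥1} x_{a₁}⋯x_{a_m}` for `l ≥ 1`. -/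
noncomputable def pP {R : Type*} [CommRing R] (x : ℕ → R) (l n m : ℕ) : R :=
  ∑ r ∈ Finset.range (n + 1), (-1 : R) ^ r * (n.choose r : R) * compSum x m (r + l)

/-- `p_{0;n}^{(m)} = (−1)^{m−1} x₀^m + Σ_{r=1}^{n} (−1)^r C(n,r) Σ_{a₁+⋯+a_m=r, aᵢ≥1} x_{a₁}⋯x_{a_m}`. -/
noncomputable def p0 {R : Type*} [CommRing R] (x : ℕ → R) (n m : ℕ) : R :=
  (-1 : R) ^ (m - 1) * x 0 ^ m +
    ∑ r ∈ Finset.Icc 1 n, (-1 : R) ^ r * (n.choose r : R) * compSum x m r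

open Finset

theorem Finset.Nat.sum_antidiagonalTuple_succ {M : Type*} [AddCommMonoid M] (k n : ℕ)
    (F : (Fin (k + 1) → ℕ) → M) :
    ∑ a ∈ Nat.antidiagonalTuple (k + 1) n, F a
      = ∑ p ∈ antidiagonal n, ∑ b ∈ Nat.antidiagonalTuple k p.2, F (Fin.cons p.1 b) := by
  simp only [Finset.sum_eq_multiset_sum, Nat.antidiagonalTuple, Multiset.Nat.antidiagonalTuple,
    List.Nat.antidiagonalTuple, Multiset.map_coe, Multiset.sum_coe]
  rw [List.flatMap_def, List.map_flatten, List.sum_flatten]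
  simp only [List.map_map, Function.comp_def, sum_map_val]
  rfl

section BinomialTransform

variable {R : Type*} [CommRing R]

def binomTransform : (ℕ → R) →ₗ[R] ℕ → R where
  toFun f n := ∑ r ∈ range (n + 1), (-1) ^ r * (n.choose r : R) * f r
  map_add' f g := by ext n; simp [mul_add, sum_add_distrib]
  map_smul' c f := by
    ext n
    simp only [Pi.smul_apply, smul_eq_mul, RingHom.id_apply, mul_sum]
    exact sum_congr rfl fun r _ => by ring

theorem binomTransform_apply (f : ℕ → R) (n : ℕ) :
    binomTransform f n = ∑ r ∈ range (n + 1), (-1) ^ r * (n.choose r : R) * f r := rfl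

theorem binomTransform_apply_zero (f : ℕ → R) : binomTransform f 0 = f 0 := by
  simp [binomTransform_apply]

theorem binomTransform_succ (f : ℕ → R) (n : ℕ) :
    binomTransform f (n + 1) = binomTransform f n - binomTransform (fun r => f (r + 1)) n := by
  have pascal := sum_choose_succ_mul (R := R) (fun i _ => (-1) ^ i * f i) n
  simp only [binomTransform_apply, sub_eq_add_neg, ← sum_neg_distrib]
  convert pascal using 1
  · exact sum_congr rfl fun i _ => by ring
  · congr 1 <;> exact sum_congr rfl fun i _ => by ring

theorem sum_range_binomTransform_shift (f : ℕ → R) (n : ℕ) :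
    ∑ i ∈ range n, binomTransform (fun r => f (r + 1)) i = f 0 - binomTransform f n := by
  have h (i : ℕ) : binomTransform (fun r => f (r + 1)) i
      = binomTransform f i - binomTransform f (i + 1) := by
    rw [binomTransform_succ]; ring
  simp only [h, sum_range_sub', binomTransform_apply_zero]

def cauchyProduct (f g : ℕ → R) (n : ℕ) : R := ∑ p ∈ antidiagonal n, f p.1 * g p.2

theorem cauchyProduct_zero (f g : ℕ → R) : cauchyProduct f g 0 = f 0 * g 0 := by
  simp [cauchyProduct]

theorem cauchyProduct_shift_left (f g : ℕ → R) (n : ℕ) :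
    cauchyProduct (fun r => f (r + 1)) g n = cauchyProduct f g (n + 1) - f 0 * g (n + 1) := by
  rw [cauchyProduct, cauchyProduct, Nat.sum_antidiagonal_succ]; ring

theorem cauchyProduct_shift_right (f g : ℕ → R) (n : ℕ) :
    cauchyProduct f (fun r => g (r + 1)) n = cauchyProduct f g (n + 1) - f (n + 1) * g 0 := by
  rw [cauchyProduct, cauchyProduct, Nat.sum_antidiagonal_succ']; ring

theorem cauchyProduct_binomTransform (f g : ℕ → R) (n : ℕ) :
    cauchyProduct (binomTransform f) (binomTransform g) n
      = ∑ i ∈ range (n + 1), binomTransform (cauchyProduct f g) i := by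
  induction n generalizing g with
  | zero => simp [cauchyProduct_zero, binomTransform_apply_zero]
  | succ n ih =>
    have hshift : cauchyProduct f (fun r => g (r + 1))
        = (fun r => cauchyProduct f g (r + 1)) - g 0 • fun r => f (r + 1) := by
      ext r; simp [cauchyProduct_shift_right, mul_comm]
    have hstep : cauchyProduct (binomTransform f) (binomTransform g) (n + 1)
        = binomTransform f (n + 1) * g 0 + cauchyProduct (binomTransform f) (binomTransform g) n
          - cauchyProduct (binomTransform f) (binomTransform fun r => g (r + 1)) n := by
      simp only [cauchyProduct, Nat.sum_antidiagonal_succ', binomTransform_succ,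
        binomTransform_apply_zero, mul_sub, sum_sub_distrib]
      ring
    rw [hstep, ih, ih, hshift, map_sub, map_smul]
    simp only [Pi.sub_apply, Pi.smul_apply, smul_eq_mul, sum_sub_distrib, ← mul_sum,
      sum_range_binomTransform_shift, cauchyProduct_zero, sum_range_succ _ (n + 1)]
    ring

end BinomialTransform

section CompositionSum

variable {R : Type*} [CommRing R] (x : ℕ → R)

theorem compSum_one (n : ℕ) : compSum x 1 n = if n = 0 then 0 else x n := by
  rcases Nat.eq_zero_or_pos n with rfl | hn
  · simp [compSum, Nat.antidiagonalTuple_one, filter_singleton]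
  · simp [compSum, Nat.antidiagonalTuple_one, filter_singleton, hn.ne', Nat.one_le_iff_ne_zero]

theorem compSum_succ_zero (k : ℕ) : compSum x (k + 1) 0 = 0 := by
  simp [compSum, Nat.antidiagonalTuple_zero_right, filter_singleton]

theorem compSum_succ (k n : ℕ) :
    compSum x (k + 1) n = ∑ p ∈ antidiagonal n, compSum x 1 p.1 * compSum x k p.2 := by
  rw [compSum, sum_filter, Nat.sum_antidiagonalTuple_succ]
  refine sum_congr rfl fun p _ => ?_
  rw [compSum_one, compSum, sum_filter, mul_sum]
  refine sum_congr rfl fun b _ => ?_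
  by_cases hp : p.1 = 0 <;>
    simp [hp, Fin.forall_fin_succ, Fin.prod_univ_succ, Nat.one_le_iff_ne_zero]

theorem p0_eq_add_binomTransform (n : ℕ) {m : ℕ} (hm : m ≠ 0) :
    p0 x n m = (-1) ^ (m - 1) * x 0 ^ m + binomTransform (compSum x m) n := by
  obtain ⟨k, rfl⟩ : ∃ k, m = k + 1 := ⟨m - 1, by omega⟩
  rw [p0, binomTransform_apply, range_eq_Ico, sum_eq_sum_Ico_succ_bot n.succ_pos,
    zero_add, Nat.succ_eq_add_one, Ico_add_one_right_eq_Icc, compSum_succ_zero]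
  ring

theorem pP_eq_binomTransform (l n m : ℕ) :
    pP x l n m = binomTransform (fun r => compSum x m (r + l)) n := rfl

theorem cauchyProduct_compSum_one_shift (k : ℕ) :
    cauchyProduct (fun r => compSum x 1 (r + 1)) (compSum x k)
      = fun n => compSum x (k + 1) (n + 1) := by
  ext n
  rw [cauchyProduct_shift_left, cauchyProduct, ← compSum_succ, compSum_one]
  simp

theorem sum_binomTransform_compSum_one_shift_mul (k N : ℕ) :
    ∑ i ∈ range N, binomTransform (fun r => compSum x 1 (r + 1)) i
        * binomTransform (compSum x (k + 1)) (N - i)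
      = -binomTransform (compSum x (k + 2)) (N + 1) := by
  have h := cauchyProduct_binomTransform (fun r => compSum x 1 (r + 1)) (compSum x (k + 1)) N
  rw [cauchyProduct_compSum_one_shift, sum_range_binomTransform_shift, compSum_succ_zero,
    cauchyProduct, Nat.sum_antidiagonal_eq_sum_range_succ_mk, sum_range_succ, Nat.sub_self,
    binomTransform_apply_zero, compSum_succ_zero, mul_zero, add_zero, zero_sub] at h
  exact h

end CompositionSum

theorem stmt7 (R : Type*) [CommRing R] (x : ℕ → R) (m n : ℕ) (hm : 2 ≤ m) (hn : 1 ≤ n) :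
    p0 x n m =
      (-1 : R) ^ (m - 1) * x 0 ^ (m - 1) * p0 x (n - 1) 1 -
        ∑ k ∈ Finset.range (n - 1), pP x 1 k 1 * p0 x (n - 1 - k) (m - 1) := by
  obtain ⟨k, rfl⟩ : ∃ k, m = k + 2 := ⟨m - 2, by omega⟩
  obtain ⟨N, rfl⟩ : ∃ N, n = N + 1 := ⟨n - 1, by omega⟩
  have htelescope : ∑ i ∈ range N, binomTransform (fun r => compSum x 1 (r + 1)) i
      = -binomTransform (compSum x 1) N := by
    rw [sum_range_binomTransform_shift, compSum_succ_zero, zero_sub]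
  rw [p0_eq_add_binomTransform x _ (by omega : k + 2 ≠ 0),
    p0_eq_add_binomTransform x _ one_ne_zero]
  simp only [show k + 2 - 1 = k + 1 from rfl, Nat.add_sub_cancel, pP_eq_binomTransform,
    p0_eq_add_binomTransform x _ k.add_one_ne_zero, mul_add, sum_add_distrib, ← sum_mul,
    htelescope, sum_binomTransform_compSum_one_shift_mul]
  ring
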